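/- arXiv:2304.01910 — 5 statements merged into one kernel-verified Lean document; each statement's English description precedes it below -/
import Mathlib

section
/- Under the setup of Lemma 1, for an IID sample S = (z_1, …, z_n) from D^n with test-set accuracy A_S(θ) = (1/n)Σ_i C_{z_i}(θ), the expected (over S) variance (over θ) of test-set accuracy satisfies: E_{S ~ D^n}[Var_{θ ~ A}(A_S(θ))] = (1 − 1/n)·Var_{θ ~ A}(A(θ)) + (1/n)·E_{z ~ D}[p_z(1 − p_z)], where p_z = E_{θ}[C_z(θ)] and A(θ) = E_{z ~ D}[C_z(θ)]. -/
open MeasureTheory Finset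

lemma integrable_of_abs_le_one {α : Type*} [MeasurableSpace α] {m : Measure α}
    [IsFiniteMeasure m] {f : α → ℝ} (hf : AEStronglyMeasurable f m)
    (h : ∀ x, |f x| ≤ 1) : Integrable f m :=
  Integrable.mono' (integrable_const 1) hf
    (Filter.Eventually.of_forall (by simpa [Real.norm_eq_abs] using h))

lemma prod_two_ite {n : ℕ} {i j : Fin n} (hij : i ≠ j) (a : Fin n → ℝ) :
    ∏ k, (if k = i then a k else if k = j then a k else 1) = a i * a j := by
  rw [← Finset.mul_prod_erase univ _ (mem_univ i), if_pos rfl]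
  have hj : j ∈ univ.erase i := by simp [Ne.symm hij]
  rw [← Finset.mul_prod_erase _ _ hj, if_neg (Ne.symm hij), if_pos rfl]
  rw [Finset.prod_eq_one, mul_one]
  intro k hk
  simp only [mem_erase] at hk
  rw [if_neg hk.2.1, if_neg hk.1]

lemma pi_integral_avg_sq {Z : Type*} [MeasurableSpace Z] (ν : Measure Z)
    [IsProbabilityMeasure ν] (n : ℕ) (hn : 0 < n)
    (g : Z → ℝ) (hg : Measurable g) (hb : ∀ z, |g z| ≤ 1) :
    ∫ s, ((n : ℝ)⁻¹ * ∑ i, g (s i)) ^ 2 ∂(Measure.pi fun _ : Fin n => ν)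
      = (1 - (n : ℝ)⁻¹) * (∫ z, g z ∂ν) ^ 2 + (n : ℝ)⁻¹ * ∫ z, g z ^ 2 ∂ν := by
  letI : MeasureSpace Z := ⟨ν⟩
  haveI : IsProbabilityMeasure (volume : Measure Z) := ‹IsProbabilityMeasure ν›
  have hπ : (Measure.pi fun _ : Fin n => ν) = (volume : Measure (Fin n → Z)) :=
    (MeasureTheory.volume_pi).symm
  have hint : ∀ i j : Fin n,
      Integrable (fun s : Fin n → Z => g (s i) * g (s j)) volume := by
    intro i j
    refine integrable_of_abs_le_one (Measurable.aestronglyMeasurable ?_) ?_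
    · exact (hg.comp (measurable_pi_apply i)).mul (hg.comp (measurable_pi_apply j))
    · intro s
      rw [abs_mul]
      calc |g (s i)| * |g (s j)| ≤ 1 * 1 :=
            mul_le_mul (hb _) (hb _) (abs_nonneg _) zero_le_one
        _ = 1 := one_mul 1
  have key : ∀ i j : Fin n, (∫ s : Fin n → Z, g (s i) * g (s j))
      = if i = j then ∫ z, g z ^ 2 ∂ν else (∫ z, g z ∂ν) ^ 2 := by
    intro i j
    by_cases hij : i = j
    · subst hij
      rw [if_pos rfl]
      calc (∫ s : Fin n → Z, g (s i) * g (s i))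
          = ∫ s : Fin n → Z, ∏ k, (if k = i then g (s k) ^ 2 else 1) := by
            refine integral_congr_ae (Filter.Eventually.of_forall fun s => ?_)
            dsimp only
            simp [Finset.prod_ite_eq', sq]
        _ = ∏ k, ∫ z, (if k = i then g z ^ 2 else 1) :=
            integral_fintype_prod_eq_prod (𝕜 := ℝ) (ι := Fin n) (μ := fun _ => (volume : Measure Z))
              (f := fun k z => if k = i then g z ^ 2 else 1)
        _ = ∏ k, (if k = i then ∫ z, g z ^ 2 ∂ν else 1) := by
            refine Finset.prod_congr rfl fun k _ => ?_
            split_ifs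
            · rfl
            · simp
        _ = ∫ z, g z ^ 2 ∂ν := by simp [Finset.prod_ite_eq']
    · rw [if_neg hij]
      calc (∫ s : Fin n → Z, g (s i) * g (s j))
          = ∫ s : Fin n → Z, ∏ k, (if k = i then g (s k) else if k = j then g (s k) else 1) := by
            refine integral_congr_ae (Filter.Eventually.of_forall fun s => ?_)
            dsimp only
            rw [prod_two_ite hij]
        _ = ∏ k, ∫ z, (if k = i then g z else if k = j then g z else 1) :=
            integral_fintype_prod_eq_prod (𝕜 := ℝ) (ι := Fin n) (μ := fun _ => (volume : Measure Z))
              (f := fun k z => if k = i then g z else if k = j then g z else 1)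
        _ = ∏ k, (if k = i then (fun _ => ∫ z, g z ∂ν) k
              else if k = j then (fun _ => ∫ z, g z ∂ν) k else 1) := by
            refine Finset.prod_congr rfl fun k _ => ?_
            split_ifs
            · rfl
            · rfl
            · simp
        _ = (∫ z, g z ∂ν) * (∫ z, g z ∂ν) := prod_two_ite hij _
        _ = (∫ z, g z ∂ν) ^ 2 := (sq _).symm
  have hn' : (n : ℝ) ≠ 0 := Nat.cast_ne_zero.mpr hn.ne'
  have hrow : ∀ i : Fin n, (∑ j : Fin n,
      (if i = j then ∫ z, g z ^ 2 ∂ν else (∫ z, g z ∂ν) ^ 2))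
      = (∫ z, g z ^ 2 ∂ν) + ((n : ℝ) - 1) * (∫ z, g z ∂ν) ^ 2 := by
    intro i
    have : (∑ j : Fin n, (if i = j then ∫ z, g z ^ 2 ∂ν else (∫ z, g z ∂ν) ^ 2))
        = ∑ j : Fin n, ((if i = j then (∫ z, g z ^ 2 ∂ν) - (∫ z, g z ∂ν) ^ 2 else 0)
            + (∫ z, g z ∂ν) ^ 2) := by
      refine Finset.sum_congr rfl fun j _ => ?_
      split_ifs <;> ring
    rw [this, Finset.sum_add_distrib, Finset.sum_ite_eq, if_pos (mem_univ i),
      Finset.sum_const, card_univ, Fintype.card_fin]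
    ring
  calc ∫ s, ((n : ℝ)⁻¹ * ∑ i, g (s i)) ^ 2 ∂(Measure.pi fun _ : Fin n => ν)
      = ∫ s : Fin n → Z, ((n : ℝ)⁻¹)^2 * ∑ i, ∑ j, g (s i) * g (s j) := by
        rw [hπ]
        refine integral_congr_ae (Filter.Eventually.of_forall fun s => ?_)
        dsimp only
        rw [mul_pow, sq (∑ i, g (s i)), Finset.sum_mul_sum]
    _ = ((n : ℝ)⁻¹)^2 * ∑ i, ∑ j, ∫ s : Fin n → Z, g (s i) * g (s j) := by
        rw [integral_const_mul, integral_finset_sum]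
        · congr 1
          refine Finset.sum_congr rfl fun i _ => ?_
          exact integral_finset_sum _ fun j _ => hint i j
        · exact fun i _ => integrable_finset_sum _ fun j _ => hint i j
    _ = ((n : ℝ)⁻¹)^2 * ∑ i : Fin n,
          ((∫ z, g z ^ 2 ∂ν) + ((n : ℝ) - 1) * (∫ z, g z ∂ν) ^ 2) := by
        simp_rw [key]
        exact congrArg _ (Finset.sum_congr rfl fun i _ => hrow i)
    _ = (1 - (n : ℝ)⁻¹) * (∫ z, g z ∂ν) ^ 2 + (n : ℝ)⁻¹ * ∫ z, g z ^ 2 ∂ν := by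
        rw [Finset.sum_const, card_univ, Fintype.card_fin]
        field_simp
        ring

lemma abs_integral_le_one {α : Type*} [MeasurableSpace α] (m : Measure α)
    [IsProbabilityMeasure m] (f : α → ℝ) (h : ∀ x, |f x| ≤ 1) :
    |∫ x, f x ∂m| ≤ 1 := by
  have := norm_integral_le_of_norm_le_const (μ := m) (C := 1)
    (Filter.Eventually.of_forall fun x => by rw [Real.norm_eq_abs]; exact h x)
  simpa [Real.norm_eq_abs, measure_univ] using this

/-- Lemma 2: decomposition of the expected (over IID test-sets S of size n)
variance (over training) of test-set accuracy into distribution-wise variance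
plus expected example-wise Bernoulli variance. -/
theorem expected_testset_variance_decomposition
    {Θ Z : Type*} [MeasurableSpace Θ] [MeasurableSpace Z]
    (μ : Measure Θ) [IsProbabilityMeasure μ]
    (ν : Measure Z) [IsProbabilityMeasure ν]
    (n : ℕ) (hn : 0 < n)
    (C : Z → Θ → ℝ)
    (hmeas : Measurable (fun p : Z × Θ => C p.1 p.2))
    (h01 : ∀ z θ, C z θ = 0 ∨ C z θ = 1) :
    (∫ s, ((∫ θ, ((n : ℝ)⁻¹ * ∑ i, C (s i) θ) ^ 2 ∂μ)
        - (∫ θ, (n : ℝ)⁻¹ * ∑ i, C (s i) θ ∂μ) ^ 2)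
        ∂(Measure.pi fun _ : Fin n => ν))
      = (1 - (n : ℝ)⁻¹) *
          ((∫ θ, (∫ z, C z θ ∂ν) ^ 2 ∂μ) - (∫ θ, ∫ z, C z θ ∂ν ∂μ) ^ 2)
        + (n : ℝ)⁻¹ * ∫ z, (∫ θ, C z θ ∂μ) * (1 - ∫ θ, C z θ ∂μ) ∂ν := by
  have hn' : (n : ℝ) ≠ 0 := Nat.cast_ne_zero.mpr hn.ne'
  set π := Measure.pi fun _ : Fin n => ν with hπdef
  haveI : IsProbabilityMeasure π := by rw [hπdef]; infer_instance
  -- basic bounds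
  have hC0 : ∀ z θ, 0 ≤ C z θ := fun z θ => by rcases h01 z θ with h | h <;> simp [h]
  have hC1 : ∀ z θ, C z θ ≤ 1 := fun z θ => by rcases h01 z θ with h | h <;> simp [h]
  have habs : ∀ z θ, |C z θ| ≤ 1 := fun z θ => abs_le.2 ⟨by linarith [hC0 z θ], hC1 z θ⟩
  have hCsq : ∀ z θ, C z θ ^ 2 = C z θ := fun z θ => by rcases h01 z θ with h | h <;> simp [h]
  -- measurability
  have hCz : ∀ z, Measurable fun θ => C z θ := fun z =>
    hmeas.comp (measurable_prodMk_left)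
  have hCθ : ∀ θ, Measurable fun z => C z θ := fun θ =>
    hmeas.comp (measurable_prodMk_right)
  have hCz_int : ∀ z, Integrable (fun θ => C z θ) μ := fun z =>
    integrable_of_abs_le_one (hCz z).aestronglyMeasurable (fun θ => habs z θ)
  have hCθ_int : ∀ θ, Integrable (fun z => C z θ) ν := fun θ =>
    integrable_of_abs_le_one (hCθ θ).aestronglyMeasurable (fun z => habs z θ)
  set p : Z → ℝ := fun z => ∫ θ, C z θ ∂μ with hpdef
  set A : Θ → ℝ := fun θ => ∫ z, C z θ ∂ν with hAdef
  have hp_meas : Measurable p :=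
    (hmeas.stronglyMeasurable.integral_prod_right').measurable
  have hA_meas : Measurable A :=
    ((hmeas.comp measurable_swap).stronglyMeasurable.integral_prod_right').measurable
  have hp_abs : ∀ z, |p z| ≤ 1 := fun z => abs_integral_le_one μ _ (habs z)
  have hA_abs : ∀ θ, |A θ| ≤ 1 := fun θ => abs_integral_le_one ν _ (fun z => habs z θ)
  have hp_int : Integrable p ν := integrable_of_abs_le_one hp_meas.aestronglyMeasurable hp_abs
  have hp2_int : Integrable (fun z => p z ^ 2) ν :=
    integrable_of_abs_le_one (hp_meas.pow_const 2).aestronglyMeasurable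
      (fun z => by rw [abs_pow]; exact pow_le_one₀ (abs_nonneg _) (hp_abs z))
  have hA_int : Integrable A μ := integrable_of_abs_le_one hA_meas.aestronglyMeasurable hA_abs
  have hA2_int : Integrable (fun θ => A θ ^ 2) μ :=
    integrable_of_abs_le_one (hA_meas.pow_const 2).aestronglyMeasurable
      (fun θ => by rw [abs_pow]; exact pow_le_one₀ (abs_nonneg _) (hA_abs θ))
  -- Fubini: ∫ A dμ = ∫ p dν
  have hswap : ∫ θ, A θ ∂μ = ∫ z, p z ∂ν := by
    rw [hAdef, hpdef]
    exact integral_integral_swap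
      (integrable_of_abs_le_one ((hmeas.comp measurable_swap).aestronglyMeasurable)
        (fun q => habs q.2 q.1))
  -- the averaged test accuracy and its bound
  have hpair : Measurable fun q : (Fin n → Z) × Θ => (n : ℝ)⁻¹ * ∑ i, C (q.1 i) q.2 :=
    measurable_const.mul (Finset.measurable_sum univ fun i _ => by
      have h1 : Measurable fun q : (Fin n → Z) × Θ => (q.1 i, q.2) :=
        ((measurable_pi_apply i).comp measurable_fst).prodMk measurable_snd
      exact hmeas.comp h1)
  have havg_abs : ∀ (s : Fin n → Z) (θ : Θ), |(n : ℝ)⁻¹ * ∑ i, C (s i) θ| ≤ 1 := by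
    intro s θ
    rw [abs_mul, abs_inv, Nat.abs_cast]
    have h1 : |∑ i, C (s i) θ| ≤ (n : ℝ) := by
      calc |∑ i, C (s i) θ| ≤ ∑ i, |C (s i) θ| := Finset.abs_sum_le_sum_abs _ _
        _ ≤ ∑ _i : Fin n, (1 : ℝ) := Finset.sum_le_sum fun i _ => habs _ _
        _ = (n : ℝ) := by simp
    calc ((n : ℝ))⁻¹ * |∑ i, C (s i) θ| ≤ ((n : ℝ))⁻¹ * (n : ℝ) :=
          mul_le_mul_of_nonneg_left h1 (by positivity)
      _ = 1 := inv_mul_cancel₀ hn'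
  have havg_sq_abs : ∀ (s : Fin n → Z) (θ : Θ), |((n : ℝ)⁻¹ * ∑ i, C (s i) θ) ^ 2| ≤ 1 := by
    intro s θ
    rw [abs_pow]
    exact pow_le_one₀ (abs_nonneg _) (havg_abs s θ)
  -- Term 1
  have hswap1 : (∫ s, ∫ θ, ((n : ℝ)⁻¹ * ∑ i, C (s i) θ) ^ 2 ∂μ ∂π)
      = ∫ θ, ∫ s, ((n : ℝ)⁻¹ * ∑ i, C (s i) θ) ^ 2 ∂π ∂μ :=
    integral_integral_swap
      (integrable_of_abs_le_one ((hpair.pow_const 2).aestronglyMeasurable)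
        (fun q => havg_sq_abs q.1 q.2))
  have hterm1 : (∫ s, ∫ θ, ((n : ℝ)⁻¹ * ∑ i, C (s i) θ) ^ 2 ∂μ ∂π)
      = (1 - (n : ℝ)⁻¹) * ∫ θ, A θ ^ 2 ∂μ + (n : ℝ)⁻¹ * ∫ z, p z ∂ν := by
    rw [hswap1]
    have hθ : ∀ θ, (∫ s, ((n : ℝ)⁻¹ * ∑ i, C (s i) θ) ^ 2 ∂π)
        = (1 - (n : ℝ)⁻¹) * A θ ^ 2 + (n : ℝ)⁻¹ * A θ := by
      intro θ
      rw [hπdef]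
      rw [pi_integral_avg_sq ν n hn (fun z => C z θ) (hCθ θ) (fun z => habs z θ)]
      have : (∫ z, C z θ ^ 2 ∂ν) = A θ := by
        rw [hAdef]
        exact integral_congr_ae (Filter.Eventually.of_forall fun z => hCsq z θ)
      rw [this]
    rw [integral_congr_ae (Filter.Eventually.of_forall hθ), integral_add
      (hA2_int.const_mul _) (hA_int.const_mul _), integral_const_mul, integral_const_mul, hswap]
  -- Term 2
  have hinner2 : ∀ s : Fin n → Z, (∫ θ, (n : ℝ)⁻¹ * ∑ i, C (s i) θ ∂μ)
      = (n : ℝ)⁻¹ * ∑ i, p (s i) := by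
    intro s
    rw [integral_const_mul, integral_finset_sum _ fun i _ => hCz_int (s i)]
  have hterm2 : (∫ s, (∫ θ, (n : ℝ)⁻¹ * ∑ i, C (s i) θ ∂μ) ^ 2 ∂π)
      = (1 - (n : ℝ)⁻¹) * (∫ z, p z ∂ν) ^ 2 + (n : ℝ)⁻¹ * ∫ z, p z ^ 2 ∂ν := by
    calc (∫ s, (∫ θ, (n : ℝ)⁻¹ * ∑ i, C (s i) θ ∂μ) ^ 2 ∂π)
        = ∫ s, ((n : ℝ)⁻¹ * ∑ i, p (s i)) ^ 2 ∂π :=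
          integral_congr_ae (Filter.Eventually.of_forall fun s => by
            dsimp only; rw [hinner2 s])
      _ = _ := by rw [hπdef]; exact pi_integral_avg_sq ν n hn p hp_meas hp_abs
  -- integrability for splitting the outer integral
  have hF_int : Integrable (fun s : Fin n → Z =>
      ∫ θ, ((n : ℝ)⁻¹ * ∑ i, C (s i) θ) ^ 2 ∂μ) π := by
    refine integrable_of_abs_le_one ?_ ?_
    · exact ((hpair.pow_const 2).stronglyMeasurable.integral_prod_right').measurable.aestronglyMeasurable
    · intro s
      exact abs_integral_le_one μ _ (fun θ => havg_sq_abs s θ)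
  have hG_int : Integrable (fun s : Fin n → Z =>
      (∫ θ, (n : ℝ)⁻¹ * ∑ i, C (s i) θ ∂μ) ^ 2) π := by
    refine integrable_of_abs_le_one ?_ ?_
    · exact ((hpair.stronglyMeasurable.integral_prod_right').measurable.pow_const 2).aestronglyMeasurable
    · intro s
      rw [abs_pow]
      exact pow_le_one₀ (abs_nonneg _) (abs_integral_le_one μ _ (fun θ => havg_abs s θ))
  -- Bernoulli variance rewrite
  have hbern : (∫ z, p z * (1 - p z) ∂ν) = (∫ z, p z ∂ν) - ∫ z, p z ^ 2 ∂ν := by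
    have : ∀ z, p z * (1 - p z) = p z - p z ^ 2 := fun z => by ring
    rw [integral_congr_ae (Filter.Eventually.of_forall this), integral_sub hp_int hp2_int]
  -- conclude
  rw [integral_sub hF_int hG_int, hterm1, hterm2, hbern]
  have hAswap : (∫ θ, ∫ z, C z θ ∂ν ∂μ) = ∫ z, p z ∂ν := hswap
  rw [hAswap]
  have hA2 : (∫ θ, (∫ z, C z θ ∂ν) ^ 2 ∂μ) = ∫ θ, A θ ^ 2 ∂μ := rfl
  rw [hA2]
  ring
end

section
/- With the setup of Lemma 2 (IID test-set S of size n sampled from D, Bernoulli correctness indicators C_z with means p_z, distribution-wise accuracy A(θ) = E_{z~D}[C_z(θ)]): E_{S ~ D^n}[Var_{θ ~ A}(A_S(θ))] ≥ Var_{θ ~ A}(A(θ)). That is, in expectation, variance in test-set accuracy over training runs overestimates distribution-wise variance. -/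
open MeasureTheory

section Aux

variable {Z : Type*} [MeasurableSpace Z]

/-- Integral of a product of coordinate functions over a finite product of a probability
measure. -/
lemma pi_integral_prod (ν : Measure Z) [IsProbabilityMeasure ν] {n : ℕ}
    (g : Fin n → Z → ℝ) :
    ∫ s, ∏ k, g k (s k) ∂(Measure.pi fun _ : Fin n => ν) = ∏ k, ∫ z, g k z ∂ν := by
  letI : MeasureSpace Z := ⟨ν⟩
  have hv : (Measure.pi fun _ : Fin n => ν) = (volume : Measure (Fin n → Z)) :=
    (volume_pi).symm
  rw [hv]
  exact MeasureTheory.integral_fintype_prod_eq_prod g (μ := fun _ : Fin n => ν)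

lemma prod_eq_two {n : ℕ} (i j : Fin n) (hij : i ≠ j) (v : Fin n → ℝ)
    (hv : ∀ k, k ≠ i → k ≠ j → v k = 1) : ∏ k, v k = v i * v j := by
  classical
  rw [← Finset.mul_prod_erase Finset.univ v (Finset.mem_univ i),
    ← Finset.mul_prod_erase _ v (Finset.mem_erase.mpr ⟨hij.symm, Finset.mem_univ j⟩)]
  have h1 : ∏ k ∈ (Finset.univ.erase i).erase j, v k = 1 := by
    apply Finset.prod_eq_one
    intro k hk
    simp only [Finset.mem_erase, Finset.mem_univ, and_true] at hk
    exact hv k hk.2 hk.1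
  rw [h1, mul_one]

lemma prod_eq_one' {n : ℕ} (i : Fin n) (v : Fin n → ℝ)
    (hv : ∀ k, k ≠ i → v k = 1) : ∏ k, v k = v i := by
  classical
  rw [← Finset.mul_prod_erase Finset.univ v (Finset.mem_univ i)]
  have h1 : ∏ k ∈ Finset.univ.erase i, v k = 1 := by
    apply Finset.prod_eq_one
    intro k hk
    exact hv k (Finset.mem_erase.mp hk).1
  rw [h1, mul_one]

/-- Integral of a single-coordinate function. -/
lemma pi_integral_single (ν : Measure Z) [IsProbabilityMeasure ν] {n : ℕ}
    (i : Fin n) (h : Z → ℝ) :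
    ∫ s, h (s i) ∂(Measure.pi fun _ : Fin n => ν) = ∫ z, h z ∂ν := by
  classical
  have := pi_integral_prod ν (n := n) (fun k => if k = i then h else fun _ => 1)
  have hL : ∀ s : Fin n → Z,
      (∏ k, (if k = i then h else fun _ => (1:ℝ)) (s k)) = h (s i) := by
    intro s
    rw [prod_eq_one' i _ (fun k hk => by simp [hk])]
    simp
  have hR : (∏ k, ∫ z, (if k = i then h else fun _ => (1:ℝ)) z ∂ν) = ∫ z, h z ∂ν := by
    rw [prod_eq_one' i _ (fun k hk => by simp [hk])]
    simp
  rw [← hR, ← this]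
  exact integral_congr_ae (Filter.Eventually.of_forall (fun s => (hL s).symm))

/-- Integral of a two-coordinate product. -/
lemma pi_integral_two (ν : Measure Z) [IsProbabilityMeasure ν] {n : ℕ}
    {i j : Fin n} (hij : i ≠ j) (h₁ h₂ : Z → ℝ) :
    ∫ s, h₁ (s i) * h₂ (s j) ∂(Measure.pi fun _ : Fin n => ν)
      = (∫ z, h₁ z ∂ν) * ∫ z, h₂ z ∂ν := by
  classical
  have := pi_integral_prod ν (n := n)
    (fun k => if k = i then h₁ else if k = j then h₂ else fun _ => 1)
  have hL : ∀ s : Fin n → Z,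
      (∏ k, (if k = i then h₁ else if k = j then h₂ else fun _ => (1:ℝ)) (s k))
        = h₁ (s i) * h₂ (s j) := by
    intro s
    rw [prod_eq_two i j hij _ (fun k hk1 hk2 => by simp [hk1, hk2])]
    simp [hij.symm, hij]
  have hR : (∏ k, ∫ z, (if k = i then h₁ else if k = j then h₂ else fun _ => (1:ℝ)) z ∂ν)
      = (∫ z, h₁ z ∂ν) * ∫ z, h₂ z ∂ν := by
    rw [prod_eq_two i j hij _ (fun k hk1 hk2 => by simp [hk1, hk2])]
    simp [hij.symm, hij]
  rw [← hR, ← this]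
  exact integral_congr_ae (Filter.Eventually.of_forall (fun s => (hL s).symm))

/-- A measurable function bounded in norm by 1 is integrable w.r.t. a finite measure. -/
lemma integrable_of_bdd {α : Type*} [MeasurableSpace α] {P : Measure α} [IsFiniteMeasure P]
    {f : α → ℝ} (hf : AEStronglyMeasurable f P) (hb : ∀ x, ‖f x‖ ≤ 1) :
    Integrable f P :=
  Integrable.mono' (integrable_const 1) hf (Filter.Eventually.of_forall hb)

lemma double_sum_ite {n : ℕ} (a b : ℝ) :
    (∑ i : Fin n, ∑ j : Fin n, (if i = j then a else b))
      = (n : ℝ) * a + (n : ℝ) * ((n : ℝ) - 1) * b := by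
  classical
  have h : ∀ i : Fin n, (∑ j : Fin n, (if i = j then a else b))
      = (a - b) + (n : ℝ) * b := by
    intro i
    have : ∀ j : Fin n, (if i = j then a else b) = (if i = j then (a - b) else 0) + b := by
      intro j; split <;> ring
    simp_rw [this]
    rw [Finset.sum_add_distrib, Finset.sum_ite_eq]
    simp
  simp_rw [h]
  simp
  ring

end Aux

/-- Theorem 1: in expectation over IID test-sets, variance in test-set accuracy
overestimates distribution-wise variance. -/
theorem expected_testset_variance_ge_distribution_variance
    {Θ Z : Type*} [MeasurableSpace Θ] [MeasurableSpace Z]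
    (μ : Measure Θ) [IsProbabilityMeasure μ]
    (ν : Measure Z) [IsProbabilityMeasure ν]
    (n : ℕ) (hn : 0 < n)
    (C : Z → Θ → ℝ)
    (hmeas : Measurable (fun p : Z × Θ => C p.1 p.2))
    (h01 : ∀ z θ, C z θ = 0 ∨ C z θ = 1) :
    (∫ θ, (∫ z, C z θ ∂ν) ^ 2 ∂μ) - (∫ θ, ∫ z, C z θ ∂ν ∂μ) ^ 2
      ≤ ∫ s, ((∫ θ, ((n : ℝ)⁻¹ * ∑ i, C (s i) θ) ^ 2 ∂μ)
          - (∫ θ, (n : ℝ)⁻¹ * ∑ i, C (s i) θ ∂μ) ^ 2)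
          ∂(Measure.pi fun _ : Fin n => ν) := by
  classical
  -- basic bounds on C
  have hC0 : ∀ z θ, 0 ≤ C z θ := fun z θ => by rcases h01 z θ with h | h <;> simp [h]
  have hC1 : ∀ z θ, C z θ ≤ 1 := fun z θ => by rcases h01 z θ with h | h <;> simp [h]
  have hCsq : ∀ z θ, C z θ * C z θ = C z θ := fun z θ => by
    rcases h01 z θ with h | h <;> simp [h]
  have hCn : ∀ z θ, ‖C z θ‖ ≤ 1 := fun z θ => by
    rw [Real.norm_eq_abs, abs_of_nonneg (hC0 z θ)]; exact hC1 z θ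
  -- measurability of slices
  have hCz : ∀ z, Measurable (fun θ => C z θ) := fun z =>
    hmeas.comp (measurable_const.prodMk measurable_id)
  have hCθ : ∀ θ, Measurable (fun z => C z θ) := fun θ =>
    hmeas.comp (measurable_id.prodMk measurable_const)
  -- the two mean functions
  set m : Z → ℝ := fun z => ∫ θ, C z θ ∂μ with hm_def
  set A : Θ → ℝ := fun θ => ∫ z, C z θ ∂ν with hA_def
  have hm_meas : Measurable m :=
    (hmeas.stronglyMeasurable.integral_prod_right').measurable
  have hA_meas : Measurable A :=
    (((hmeas.comp measurable_swap).stronglyMeasurable).integral_prod_right').measurable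
  have hm0 : ∀ z, 0 ≤ m z := fun z => integral_nonneg (fun θ => hC0 z θ)
  have hm1 : ∀ z, m z ≤ 1 := fun z => by
    calc m z ≤ ∫ _θ, (1:ℝ) ∂μ :=
          integral_mono (integrable_of_bdd (hCz z).aestronglyMeasurable (hCn z))
            (integrable_const 1) (hC1 z)
      _ = 1 := by simp
  have hA0 : ∀ θ, 0 ≤ A θ := fun θ => integral_nonneg (fun z => hC0 z θ)
  have hA1 : ∀ θ, A θ ≤ 1 := fun θ => by
    calc A θ ≤ ∫ _z, (1:ℝ) ∂ν :=
          integral_mono (integrable_of_bdd (hCθ θ).aestronglyMeasurable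
            (fun z => hCn z θ)) (integrable_const 1) (fun z => hC1 z θ)
      _ = 1 := by simp
  have hmn : ∀ z, ‖m z‖ ≤ 1 := fun z => by
    rw [Real.norm_eq_abs, abs_of_nonneg (hm0 z)]; exact hm1 z
  have hAn : ∀ θ, ‖A θ‖ ≤ 1 := fun θ => by
    rw [Real.norm_eq_abs, abs_of_nonneg (hA0 θ)]; exact hA1 θ
  -- pairwise correlation function
  set g : Z → Z → ℝ := fun z z' => ∫ θ, C z θ * C z' θ ∂μ with hg_def
  have hCC_meas : Measurable (fun q : (Z × Z) × Θ => C q.1.1 q.2 * C q.1.2 q.2) :=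
    (hmeas.comp ((measurable_fst.comp measurable_fst).prodMk measurable_snd)).mul
      (hmeas.comp ((measurable_snd.comp measurable_fst).prodMk measurable_snd))
  have hg_meas : Measurable (fun p : Z × Z => g p.1 p.2) :=
    (hCC_meas.stronglyMeasurable.integral_prod_right').measurable
  have hg0 : ∀ z z', 0 ≤ g z z' := fun z z' =>
    integral_nonneg (fun θ => mul_nonneg (hC0 z θ) (hC0 z' θ))
  have hCCn : ∀ z z' θ, ‖C z θ * C z' θ‖ ≤ 1 := fun z z' θ => by
    rw [norm_mul]
    calc ‖C z θ‖ * ‖C z' θ‖ ≤ 1 * 1 :=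
      mul_le_mul (hCn z θ) (hCn z' θ) (norm_nonneg _) zero_le_one
    _ = 1 := by ring
  have hCC_int : ∀ z z', Integrable (fun θ => C z θ * C z' θ) μ := fun z z' =>
    integrable_of_bdd ((hCz z).mul (hCz z')).aestronglyMeasurable (hCCn z z')
  have hgn : ∀ z z', ‖g z z'‖ ≤ 1 := fun z z' => by
    rw [Real.norm_eq_abs, abs_of_nonneg (hg0 z z')]
    calc g z z' ≤ ∫ _θ, (1:ℝ) ∂μ :=
        integral_mono (hCC_int z z') (integrable_const 1) (fun θ => by
          have := hCCn z z' θ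
          rwa [Real.norm_eq_abs, abs_of_nonneg (mul_nonneg (hC0 z θ) (hC0 z' θ))] at this)
      _ = 1 := by simp
  -- g on the diagonal is m, and g is dominated by each marginal mean
  have hg_diag : ∀ z, g z z = m z := fun z => by
    simp only [hg_def, hm_def]
    exact integral_congr_ae (Filter.Eventually.of_forall (fun θ => hCsq z θ))
  have hg_le_left : ∀ z z', g z z' ≤ m z := fun z z' =>
    integral_mono (hCC_int z z')
      (integrable_of_bdd (hCz z).aestronglyMeasurable (hCn z))
      (fun θ => by nlinarith [hC0 z θ, hC1 z θ, hC0 z' θ, hC1 z' θ])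
  have hg_le_right : ∀ z z', g z z' ≤ m z' := fun z z' =>
    integral_mono (hCC_int z z')
      (integrable_of_bdd (hCz z').aestronglyMeasurable (hCn z'))
      (fun θ => by nlinarith [hC0 z θ, hC1 z θ, hC0 z' θ, hC1 z' θ])
  -- abbreviations for the scalar quantities
  set Em : ℝ := ∫ z, m z ∂ν with hEm_def
  set Em2 : ℝ := ∫ z, m z * m z ∂ν with hEm2_def
  set Q : ℝ := ∫ θ, A θ * A θ ∂μ with hQ_def
  have hm_int : Integrable m ν := integrable_of_bdd hm_meas.aestronglyMeasurable hmn
  have hmm_int : Integrable (fun z => m z * m z) ν :=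
    integrable_of_bdd (hm_meas.mul hm_meas).aestronglyMeasurable
      (fun z => by
        rw [norm_mul]
        calc ‖m z‖ * ‖m z‖ ≤ 1 * 1 :=
          mul_le_mul (hmn z) (hmn z) (norm_nonneg _) zero_le_one
        _ = 1 := by ring)
  -- Fubini: ∫θ A = ∫z m
  have hFub : ∫ θ, A θ ∂μ = Em := by
    simp only [hA_def, hEm_def, hm_def]
    have hint : Integrable (Function.uncurry fun (θ : Θ) (z : Z) => C z θ) (μ.prod ν) :=
      integrable_of_bdd (by exact (hmeas.comp measurable_swap).aestronglyMeasurable)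
        (fun p => hCn p.2 p.1)
    exact integral_integral_swap hint
  -- Q as a double integral of g
  have hCA_meas : Measurable (fun p : Θ × Z => C p.2 p.1 * A p.1) :=
    (hmeas.comp measurable_swap).mul (hA_meas.comp measurable_fst)
  have hCAn : ∀ p : Θ × Z, ‖C p.2 p.1 * A p.1‖ ≤ 1 := fun p => by
    rw [norm_mul]
    calc ‖C p.2 p.1‖ * ‖A p.1‖ ≤ 1 * 1 :=
      mul_le_mul (hCn p.2 p.1) (hAn p.1) (norm_nonneg _) zero_le_one
    _ = 1 := by ring
  have hQ_eq : Q = ∫ z, ∫ z', g z z' ∂ν ∂ν := by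
    have h1 : ∫ θ, A θ * A θ ∂μ = ∫ θ, ∫ z, C z θ * A θ ∂ν ∂μ :=
      integral_congr_ae (Filter.Eventually.of_forall fun θ => by
        show A θ * A θ = ∫ z, C z θ * A θ ∂ν
        rw [integral_mul_const])
    have h2 : ∫ θ, ∫ z, C z θ * A θ ∂ν ∂μ = ∫ z, ∫ θ, C z θ * A θ ∂μ ∂ν :=
      integral_integral_swap
        (integrable_of_bdd (by exact hCA_meas.aestronglyMeasurable) hCAn)
    have h3 : ∀ z, ∫ θ, C z θ * A θ ∂μ = ∫ z', g z z' ∂ν := by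
      intro z
      have h4 : ∀ θ, C z θ * A θ = ∫ z', C z θ * C z' θ ∂ν := fun θ => by
        rw [integral_const_mul]
      rw [integral_congr_ae (Filter.Eventually.of_forall h4)]
      have h5 : ∫ θ, ∫ z', C z θ * C z' θ ∂ν ∂μ = ∫ z', ∫ θ, C z θ * C z' θ ∂μ ∂ν :=
        integral_integral_swap
          (integrable_of_bdd
            (by exact (((hCz z).comp measurable_fst).mul
              (hmeas.comp measurable_swap)).aestronglyMeasurable)
            (fun p => hCCn z p.2 p.1))
      rw [h5]
    rw [hQ_def, h1, h2]
    exact integral_congr_ae (Filter.Eventually.of_forall h3)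
  -- key inequality
  have hφ_int : Integrable (fun z => m z - m z * m z) ν := hm_int.sub hmm_int
  have hinner_bound : ∀ z, ∫ z', g z z' ∂ν
      ≤ m z * Em + (m z - m z * m z) / 2 + (Em - Em2) / 2 := by
    intro z
    have hgz_int : Integrable (fun z' => g z z') ν :=
      integrable_of_bdd
        (by exact (hg_meas.comp (measurable_const.prodMk measurable_id)).aestronglyMeasurable)
        (fun z' => hgn z z')
    have hb_int : Integrable
        (fun z' => m z * m z' + (m z - m z * m z) / 2 + (m z' - m z' * m z') / 2) ν :=
      ((hm_int.const_mul _).add (integrable_const _)).add (hφ_int.div_const 2)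
    have hpt : ∀ z', g z z'
        ≤ m z * m z' + (m z - m z * m z) / 2 + (m z' - m z' * m z') / 2 := by
      intro z'
      rcases le_total (m z) (m z') with h | h
      · nlinarith [hg_le_left z z', hm0 z, hm1 z, hm0 z', hm1 z',
          mul_nonneg (hm0 z) (sub_nonneg.2 h),
          mul_nonneg (sub_nonneg.2 h) (sub_nonneg.2 (hm1 z'))]
      · nlinarith [hg_le_right z z', hm0 z, hm1 z, hm0 z', hm1 z',
          mul_nonneg (hm0 z') (sub_nonneg.2 h),
          mul_nonneg (sub_nonneg.2 h) (sub_nonneg.2 (hm1 z))]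
    calc ∫ z', g z z' ∂ν
        ≤ ∫ z', (m z * m z' + (m z - m z * m z) / 2 + (m z' - m z' * m z') / 2) ∂ν :=
          integral_mono hgz_int hb_int hpt
      _ = m z * Em + (m z - m z * m z) / 2 + (Em - Em2) / 2 := by
          have hsplit : (fun z' => m z * m z' + (m z - m z * m z) / 2 + (m z' - m z' * m z') / 2)
              = ((fun z' => m z * m z') + (fun _ => (m z - m z * m z) / 2))
                + (fun z' => (m z' - m z' * m z') / 2) := rfl
          rw [hsplit, integral_add' ((hm_int.const_mul _).add (integrable_const _))
              (hφ_int.div_const 2),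
            integral_add' (hm_int.const_mul _) (integrable_const _)]
          rw [integral_const_mul, integral_div, integral_const, integral_div,
            integral_sub hm_int hmm_int]
          simp [← hEm_def, ← hEm2_def]
  have hinner_int : Integrable (fun z => ∫ z', g z z' ∂ν) ν := by
    refine integrable_of_bdd
      (by exact (hg_meas.stronglyMeasurable.integral_prod_right').measurable.aestronglyMeasurable)
      (fun z => ?_)
    calc ‖∫ z', g z z' ∂ν‖ ≤ 1 * (ν Set.univ).toReal :=
        norm_integral_le_of_norm_le_const (Filter.Eventually.of_forall (fun z' => hgn z z'))
      _ = 1 := by simp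
  have hb2_int : Integrable (fun z => m z * Em + (m z - m z * m z) / 2 + (Em - Em2) / 2) ν :=
    ((hm_int.mul_const _).add (hφ_int.div_const 2)).add (integrable_const _)
  have hkey : Q ≤ Em * Em + Em - Em2 := by
    rw [hQ_eq]
    calc ∫ z, ∫ z', g z z' ∂ν ∂ν
        ≤ ∫ z, (m z * Em + (m z - m z * m z) / 2 + (Em - Em2) / 2) ∂ν :=
          integral_mono hinner_int hb2_int hinner_bound
      _ = Em * Em + (Em - Em2) / 2 + (Em - Em2) / 2 := by
          have hsplit : (fun z => m z * Em + (m z - m z * m z) / 2 + (Em - Em2) / 2)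
              = ((fun z => m z * Em) + (fun z => (m z - m z * m z) / 2))
                + (fun _ => (Em - Em2) / 2) := rfl
          rw [hsplit, integral_add' ((hm_int.mul_const _).add (hφ_int.div_const 2))
              (integrable_const _),
            integral_add' (hm_int.mul_const _) (hφ_int.div_const 2)]
          rw [integral_mul_const, integral_div, integral_sub hm_int hmm_int, integral_const]
          simp [← hEm_def, ← hEm2_def]
      _ = Em * Em + Em - Em2 := by ring
  -- per-test-set reduction
  have hTT : ∀ s : Fin n → Z, ∫ θ, ((n : ℝ)⁻¹ * ∑ i, C (s i) θ) ^ 2 ∂μ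
      = (n : ℝ)⁻¹ ^ 2 * ∑ i, ∑ j, g (s i) (s j) := by
    intro s
    have h1 : ∀ θ, ((n : ℝ)⁻¹ * ∑ i, C (s i) θ) ^ 2
        = (n : ℝ)⁻¹ ^ 2 * ∑ i, ∑ j, C (s i) θ * C (s j) θ := by
      intro θ
      rw [← Finset.sum_mul_sum]
      ring
    rw [integral_congr_ae (Filter.Eventually.of_forall h1), integral_const_mul]
    congr 1
    simp only [hg_def]
    rw [integral_finset_sum _
      (fun i _ => integrable_finset_sum _ (fun j _ => hCC_int (s i) (s j)))]
    exact Finset.sum_congr rfl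
      (fun i _ => integral_finset_sum _ (fun j _ => hCC_int (s i) (s j)))
  have hM : ∀ s : Fin n → Z, ∫ θ, (n : ℝ)⁻¹ * ∑ i, C (s i) θ ∂μ
      = (n : ℝ)⁻¹ * ∑ i, m (s i) := by
    intro s
    rw [integral_const_mul]
    congr 1
    simp only [hm_def]
    exact integral_finset_sum _
      (fun i _ => integrable_of_bdd (hCz (s i)).aestronglyMeasurable (hCn (s i)))
  have hinner : ∀ s : Fin n → Z,
      (∫ θ, ((n : ℝ)⁻¹ * ∑ i, C (s i) θ) ^ 2 ∂μ)
        - (∫ θ, (n : ℝ)⁻¹ * ∑ i, C (s i) θ ∂μ) ^ 2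
      = ∑ i, ∑ j, (n : ℝ)⁻¹ ^ 2 * (g (s i) (s j) - m (s i) * m (s j)) := by
    intro s
    rw [hTT s, hM s]
    have h2 : ((n : ℝ)⁻¹ * ∑ i, m (s i)) ^ 2
        = (n : ℝ)⁻¹ ^ 2 * ∑ i, ∑ j, m (s i) * m (s j) := by
      rw [← Finset.sum_mul_sum]
      ring
    rw [h2, ← mul_sub]
    simp only [← Finset.sum_sub_distrib]
    simp only [Finset.mul_sum]
  -- integrals of the individual terms over test sets
  have hSg : ∀ i j : Fin n, ∫ s, g (s i) (s j) ∂(Measure.pi fun _ : Fin n => ν)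
      = if i = j then Em else Q := by
    intro i j
    by_cases hij : i = j
    · subst hij
      rw [if_pos rfl]
      have : ∀ s : Fin n → Z, g (s i) (s i) = m (s i) := fun s => hg_diag (s i)
      rw [integral_congr_ae (Filter.Eventually.of_forall this)]
      rw [pi_integral_single ν i m]
    · rw [if_neg hij]
      have hp1 : Measurable (fun p : (Fin n → Z) × Θ => (p.1 i, p.2)) :=
        ((measurable_pi_apply i).comp measurable_fst).prodMk measurable_snd
      have hp2 : Measurable (fun p : (Fin n → Z) × Θ => (p.1 j, p.2)) :=
        ((measurable_pi_apply j).comp measurable_fst).prodMk measurable_snd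
      have hFmeas : Measurable (fun p : (Fin n → Z) × Θ => C (p.1 i) p.2 * C (p.1 j) p.2) :=
        (hmeas.comp hp1).mul (hmeas.comp hp2)
      have hint : Integrable
          (Function.uncurry fun (s : Fin n → Z) (θ : Θ) => C (s i) θ * C (s j) θ)
          ((Measure.pi fun _ : Fin n => ν).prod μ) :=
        integrable_of_bdd (by exact hFmeas.aestronglyMeasurable)
          (fun p => hCCn (p.1 i) (p.1 j) p.2)
      calc ∫ s, g (s i) (s j) ∂(Measure.pi fun _ : Fin n => ν)
          = ∫ s, ∫ θ, C (s i) θ * C (s j) θ ∂μ ∂(Measure.pi fun _ : Fin n => ν) := by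
            simp only [hg_def]
        _ = ∫ θ, ∫ s, C (s i) θ * C (s j) θ ∂(Measure.pi fun _ : Fin n => ν) ∂μ :=
            integral_integral_swap hint
        _ = ∫ θ, A θ * A θ ∂μ := by
            refine integral_congr_ae (Filter.Eventually.of_forall fun θ => ?_)
            show (∫ s, C (s i) θ * C (s j) θ ∂(Measure.pi fun _ : Fin n => ν)) = A θ * A θ
            rw [pi_integral_two ν hij (fun z => C z θ) (fun z => C z θ)]
        _ = Q := hQ_def.symm
  have hSm : ∀ i j : Fin n, ∫ s, m (s i) * m (s j) ∂(Measure.pi fun _ : Fin n => ν)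
      = if i = j then Em2 else Em * Em := by
    intro i j
    by_cases hij : i = j
    · subst hij
      rw [if_pos rfl]
      rw [show (∫ s, m (s i) * m (s i) ∂(Measure.pi fun _ : Fin n => ν))
          = ∫ z, m z * m z ∂ν from pi_integral_single ν i (fun z => m z * m z)]
    · rw [if_neg hij, pi_integral_two ν hij m m]
  -- integrability over test sets
  have hgS_int : ∀ i j : Fin n, Integrable (fun s : Fin n → Z => g (s i) (s j))
      (Measure.pi fun _ : Fin n => ν) := by
    intro i j
    have hpair : Measurable (fun s : Fin n → Z => (s i, s j)) :=
      (measurable_pi_apply i).prodMk (measurable_pi_apply j)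
    have hmsr : Measurable (fun s : Fin n → Z => g (s i) (s j)) := hg_meas.comp hpair
    exact integrable_of_bdd hmsr.aestronglyMeasurable (fun s => hgn (s i) (s j))
  have hmmS_int : ∀ i j : Fin n, Integrable (fun s : Fin n → Z => m (s i) * m (s j))
      (Measure.pi fun _ : Fin n => ν) := by
    intro i j
    have hmsr : Measurable (fun s : Fin n → Z => m (s i) * m (s j)) :=
      (hm_meas.comp (measurable_pi_apply i)).mul (hm_meas.comp (measurable_pi_apply j))
    refine integrable_of_bdd hmsr.aestronglyMeasurable (fun s => ?_)
    rw [norm_mul]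
    calc ‖m (s i)‖ * ‖m (s j)‖ ≤ 1 * 1 :=
      mul_le_mul (hmn (s i)) (hmn (s j)) (norm_nonneg _) zero_le_one
    _ = 1 := by ring
  have hterm : ∀ i j : Fin n, Integrable
      (fun s : Fin n → Z => (n : ℝ)⁻¹ ^ 2 * (g (s i) (s j) - m (s i) * m (s j)))
      (Measure.pi fun _ : Fin n => ν) :=
    fun i j => ((hgS_int i j).sub (hmmS_int i j)).const_mul _
  -- total expectation over test sets
  have hRHS : (∫ s, ((∫ θ, ((n : ℝ)⁻¹ * ∑ i, C (s i) θ) ^ 2 ∂μ)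
        - (∫ θ, (n : ℝ)⁻¹ * ∑ i, C (s i) θ ∂μ) ^ 2)
        ∂(Measure.pi fun _ : Fin n => ν))
      = (n : ℝ)⁻¹ ^ 2 * ((n : ℝ) * (Em - Em2)
        + (n : ℝ) * ((n : ℝ) - 1) * (Q - Em * Em)) := by
    calc (∫ s, ((∫ θ, ((n : ℝ)⁻¹ * ∑ i, C (s i) θ) ^ 2 ∂μ)
          - (∫ θ, (n : ℝ)⁻¹ * ∑ i, C (s i) θ ∂μ) ^ 2)
          ∂(Measure.pi fun _ : Fin n => ν))
        = ∫ s, (∑ i, ∑ j, (n : ℝ)⁻¹ ^ 2 * (g (s i) (s j) - m (s i) * m (s j)))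
            ∂(Measure.pi fun _ : Fin n => ν) :=
          integral_congr_ae (Filter.Eventually.of_forall hinner)
      _ = ∑ i : Fin n, ∑ j : Fin n, ∫ s,
            (n : ℝ)⁻¹ ^ 2 * (g (s i) (s j) - m (s i) * m (s j))
            ∂(Measure.pi fun _ : Fin n => ν) := by
          rw [integral_finset_sum _
            (fun i _ => integrable_finset_sum _ (fun j _ => hterm i j))]
          exact Finset.sum_congr rfl
            (fun i _ => integral_finset_sum _ (fun j _ => hterm i j))
      _ = ∑ i : Fin n, ∑ j : Fin n,
            (if i = j then (n : ℝ)⁻¹ ^ 2 * (Em - Em2)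
              else (n : ℝ)⁻¹ ^ 2 * (Q - Em * Em)) := by
          refine Finset.sum_congr rfl (fun i _ => Finset.sum_congr rfl (fun j _ => ?_))
          rw [integral_const_mul, integral_sub (hgS_int i j) (hmmS_int i j), hSg i j, hSm i j]
          by_cases hij : i = j <;> simp [hij]
      _ = (n : ℝ) * ((n : ℝ)⁻¹ ^ 2 * (Em - Em2))
            + (n : ℝ) * ((n : ℝ) - 1) * ((n : ℝ)⁻¹ ^ 2 * (Q - Em * Em)) :=
          double_sum_ite _ _
      _ = (n : ℝ)⁻¹ ^ 2 * ((n : ℝ) * (Em - Em2)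
            + (n : ℝ) * ((n : ℝ) - 1) * (Q - Em * Em)) := by ring
  -- rewrite the goal and finish with algebra
  have hLHS1 : ∫ θ, (∫ z, C z θ ∂ν) ^ 2 ∂μ = Q := by
    rw [hQ_def]
    refine integral_congr_ae (Filter.Eventually.of_forall fun θ => ?_)
    show (∫ z, C z θ ∂ν) ^ 2 = A θ * A θ
    rw [sq]
  rw [hLHS1, hFub, hRHS]
  have hN0 : (0 : ℝ) < (n : ℝ) := by exact_mod_cast hn
  have hmul := mul_le_mul_of_nonneg_left hkey hN0.le
  have h2 : (n : ℝ) ^ 2 * (Q - Em ^ 2)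
      ≤ (n : ℝ) * (Em - Em2) + (n : ℝ) * ((n : ℝ) - 1) * (Q - Em * Em) := by
    nlinarith [hmul, hN0]
  have h3 : Q - Em ^ 2 = (n : ℝ)⁻¹ ^ 2 * ((n : ℝ) ^ 2 * (Q - Em ^ 2)) := by
    field_simp
  rw [h3]
  exact mul_le_mul_of_nonneg_left h2 (by positivity)
end

section
/- With the setup of Lemma 2, for n ≥ 2: Var_{θ ~ A}(A(θ)) = (n/(n−1)) · E_{S ~ D^n}[ Var_{θ ~ A}(A_S(θ)) − (1/n²)·Σ_{i=1}^n p_{z_i}(1 − p_{z_i}) ], where p_z = E_θ[C_z(θ)]. Consequently the bracketed quantity is an unbiased estimator (up to the n/(n−1) factor) of the distribution-wise variance. -/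
open MeasureTheory

lemma aux_map_eval {Z : Type*} [MeasurableSpace Z] (ν : Measure Z) [IsProbabilityMeasure ν]
    (n : ℕ) (i : Fin n) :
    (Measure.pi fun _ : Fin n => ν).map (fun s => s i) = ν := by
  apply Measure.ext; intro t ht
  rw [Measure.map_apply (measurable_pi_apply i) ht]
  have hset : (fun s : Fin n → Z => s i) ⁻¹' t
      = Set.univ.pi (Function.update (fun _ => Set.univ) i t) :=
    by rw [Set.univ_pi_update_univ]
  rw [hset, Measure.pi_pi]
  rw [Finset.prod_eq_single i (fun b _ hb => by simp [Function.update_of_ne hb]) (by simp)]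
  simp

lemma aux_map_pair {Z : Type*} [MeasurableSpace Z] (ν : Measure Z) [IsProbabilityMeasure ν]
    (n : ℕ) (i j : Fin n) (hij : i ≠ j) :
    (Measure.pi fun _ : Fin n => ν).map (fun s => (s i, s j)) = ν.prod ν := by
  refine (Measure.prod_eq fun A B hA hB => ?_).symm
  rw [Measure.map_apply ((measurable_pi_apply i).prodMk (measurable_pi_apply j)) (hA.prod hB)]
  have hset : (fun s : Fin n → Z => (s i, s j)) ⁻¹' (A ×ˢ B)
      = Set.univ.pi (Function.update (Function.update (fun _ => Set.univ) i A) j B) := by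
    ext x
    simp only [Set.mem_preimage, Set.mem_prod, Set.mem_pi, Set.mem_univ, true_implies]
    constructor
    · rintro ⟨h1, h2⟩ k
      rcases eq_or_ne k j with rfl | hkj
      · simpa using h2
      · rw [Function.update_of_ne hkj]
        rcases eq_or_ne k i with rfl | hki
        · simpa using h1
        · simp [Function.update_of_ne hki]
    · intro h
      refine ⟨?_, ?_⟩
      · have := h i; rwa [Function.update_of_ne hij, Function.update_self] at this
      · have := h j; rwa [Function.update_self] at this
  rw [hset, Measure.pi_pi,
    ← Finset.mul_prod_erase Finset.univ _ (Finset.mem_univ i),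
    ← Finset.mul_prod_erase _ _ (Finset.mem_erase.2 ⟨Ne.symm hij, Finset.mem_univ j⟩)]
  have h1 : ∀ k ∈ (Finset.univ.erase i).erase j,
      ν (Function.update (Function.update (fun _ => (Set.univ : Set Z)) i A) j B k) = 1 := by
    intro k hk
    obtain ⟨hkj, hk'⟩ := Finset.mem_erase.mp hk
    obtain ⟨hki, -⟩ := Finset.mem_erase.mp hk'
    rw [Function.update_of_ne hkj, Function.update_of_ne hki]; simp
  rw [Finset.prod_eq_one h1, Function.update_of_ne hij, Function.update_self,
    Function.update_self, mul_one]

lemma aux_int_eval {Z : Type*} [MeasurableSpace Z] (ν : Measure Z) [IsProbabilityMeasure ν]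
    (n : ℕ) (f : Z → ℝ) (hf : Measurable f) (i : Fin n) :
    ∫ s, f (s i) ∂(Measure.pi fun _ : Fin n => ν) = ∫ z, f z ∂ν := by
  rw [← integral_map (measurable_pi_apply i).aemeasurable hf.aestronglyMeasurable,
    aux_map_eval ν n i]

lemma aux_int_pair {Z : Type*} [MeasurableSpace Z] (ν : Measure Z) [IsProbabilityMeasure ν]
    (n : ℕ) (f g : Z → ℝ) (hf : Measurable f) (hg : Measurable g) (i j : Fin n) (hij : i ≠ j) :
    ∫ s, f (s i) * g (s j) ∂(Measure.pi fun _ : Fin n => ν)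
      = (∫ z, f z ∂ν) * ∫ z, g z ∂ν := by
  rw [← integral_prod_mul f g, ← aux_map_pair ν n i j hij,
    integral_map ((measurable_pi_apply i).prodMk (measurable_pi_apply j)).aemeasurable
      ((hf.comp measurable_fst).mul (hg.comp measurable_snd)).aestronglyMeasurable]

lemma aux_integrable {α : Type*} [MeasurableSpace α] {m : Measure α} [IsFiniteMeasure m]
    {f : α → ℝ} (hm : AEStronglyMeasurable f m) (B : ℝ) (h0 : ∀ x, 0 ≤ f x)
    (h1 : ∀ x, f x ≤ B) : Integrable f m :=
  ⟨hm, HasFiniteIntegral.of_bounded (C := B)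
    (Filter.Eventually.of_forall fun x => by
      rw [Real.norm_eq_abs, abs_of_nonneg (h0 x)]; exact h1 x)⟩

lemma aux_int_le_one {α : Type*} [MeasurableSpace α] {m : Measure α} [IsProbabilityMeasure m]
    {f : α → ℝ} (hint : Integrable f m) (h1 : ∀ x, f x ≤ 1) : ∫ x, f x ∂m ≤ 1 := by
  calc ∫ x, f x ∂m ≤ ∫ _, (1:ℝ) ∂m := integral_mono hint (integrable_const 1) h1
  _ = 1 := by simp

lemma aux_sum_ite (n : ℕ) (a b : ℝ) :
    (∑ i : Fin n, ∑ j : Fin n, if i = j then a else b)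
      = (n:ℝ) * a + (n:ℝ) * ((n:ℝ) - 1) * b := by
  have h : ∀ i : Fin n, (∑ j : Fin n, if i = j then a else b) = a + ((n:ℝ) - 1) * b := by
    intro i
    have h2 : ∀ j : Fin n, (if i = j then a else b) = b + (if i = j then a - b else 0) := by
      intro j; split <;> ring
    simp_rw [h2, Finset.sum_add_distrib, Finset.sum_ite_eq, Finset.sum_const,
      Finset.card_univ, Fintype.card_fin, Finset.mem_univ, if_true]
    ring
  rw [Finset.sum_congr rfl fun i _ => h i, Finset.sum_const, Finset.card_univ, Fintype.card_fin]
  push_cast [nsmul_eq_mul]; ring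


/-- Theorem 2: the distribution-wise variance equals n/(n−1) times the expected
excess of the test-set variance over the variance predicted by example-wise
independence. -/
theorem distribution_variance_unbiased_estimator
    {Θ Z : Type*} [MeasurableSpace Θ] [MeasurableSpace Z]
    (μ : Measure Θ) [IsProbabilityMeasure μ]
    (ν : Measure Z) [IsProbabilityMeasure ν]
    (n : ℕ) (hn : 2 ≤ n)
    (C : Z → Θ → ℝ)
    (hmeas : Measurable (fun p : Z × Θ => C p.1 p.2))
    (h01 : ∀ z θ, C z θ = 0 ∨ C z θ = 1) :
    (∫ θ, (∫ z, C z θ ∂ν) ^ 2 ∂μ) - (∫ θ, ∫ z, C z θ ∂ν ∂μ) ^ 2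
      = (n : ℝ) / ((n : ℝ) - 1) *
        ∫ s, (((∫ θ, ((n : ℝ)⁻¹ * ∑ i, C (s i) θ) ^ 2 ∂μ)
            - (∫ θ, (n : ℝ)⁻¹ * ∑ i, C (s i) θ ∂μ) ^ 2)
          - ((n : ℝ) ^ 2)⁻¹ *
              ∑ i, (∫ θ, C (s i) θ ∂μ) * (1 - ∫ θ, C (s i) θ ∂μ))
          ∂(Measure.pi fun _ : Fin n => ν) := by
  have hn2 : (2:ℝ) ≤ (n:ℝ) := by exact_mod_cast hn
  have hn0 : (n:ℝ) ≠ 0 := by linarith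
  have hn1 : (n:ℝ) - 1 ≠ 0 := by linarith
  have hC0 : ∀ z θ, 0 ≤ C z θ := fun z θ => by rcases h01 z θ with h | h <;> simp [h]
  have hC1 : ∀ z θ, C z θ ≤ 1 := fun z θ => by rcases h01 z θ with h | h <;> simp [h]
  have hCsq : ∀ z θ, C z θ * C z θ = C z θ := fun z θ => by rcases h01 z θ with h | h <;> simp [h]
  have hCC0 : ∀ z w θ, 0 ≤ C z θ * C w θ := fun z w θ => mul_nonneg (hC0 z θ) (hC0 w θ)
  have hCC1 : ∀ z w θ, C z θ * C w θ ≤ 1 := fun z w θ => by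
    nlinarith [hC0 z θ, hC1 z θ, hC0 w θ, hC1 w θ]
  have hmz : ∀ z, Measurable fun θ => C z θ := fun z => hmeas.comp measurable_prodMk_left
  have hmθ : ∀ θ, Measurable fun z => C z θ := fun θ => hmeas.comp measurable_prodMk_right
  -- p := fun z => ∫ θ, C z θ ∂μ facts
  have hpm : Measurable fun z => ∫ θ, C z θ ∂μ :=
    hmeas.stronglyMeasurable.integral_prod_right'.measurable
  have hintCz : ∀ z, Integrable (fun θ => C z θ) μ := fun z =>
    aux_integrable (hmz z).aestronglyMeasurable 1 (hC0 z) (hC1 z)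
  have hp0 : ∀ z, 0 ≤ ∫ θ, C z θ ∂μ := fun z => integral_nonneg (hC0 z)
  have hp1 : ∀ z, (∫ θ, C z θ ∂μ) ≤ 1 := fun z => aux_int_le_one (hintCz z) (hC1 z)
  have hintp : Integrable (fun z => ∫ θ, C z θ ∂μ) ν :=
    aux_integrable hpm.aestronglyMeasurable 1 hp0 hp1
  have hintp2 : Integrable (fun z => (∫ θ, C z θ ∂μ) ^ 2) ν :=
    aux_integrable (hpm.pow_const 2).aestronglyMeasurable 1 (fun z => sq_nonneg _)
      (fun z => pow_le_one₀ (hp0 z) (hp1 z))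
  -- A := fun θ => ∫ z, C z θ ∂ν facts
  have hAm : Measurable fun θ => ∫ z, C z θ ∂ν :=
    hmeas.stronglyMeasurable.integral_prod_left'.measurable
  have hintCθ : ∀ θ, Integrable (fun z => C z θ) ν := fun θ =>
    aux_integrable (hmθ θ).aestronglyMeasurable 1 (fun z => hC0 z θ) (fun z => hC1 z θ)
  have hA0 : ∀ θ, 0 ≤ ∫ z, C z θ ∂ν := fun θ => integral_nonneg fun z => hC0 z θ
  have hA1 : ∀ θ, (∫ z, C z θ ∂ν) ≤ 1 := fun θ => aux_int_le_one (hintCθ θ) fun z => hC1 z θ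
  have hintA : Integrable (fun θ => ∫ z, C z θ ∂ν) μ :=
    aux_integrable hAm.aestronglyMeasurable 1 hA0 hA1
  have hintA2 : Integrable (fun θ => (∫ z, C z θ ∂ν) ^ 2) μ :=
    aux_integrable (hAm.pow_const 2).aestronglyMeasurable 1 (fun θ => sq_nonneg _)
      (fun θ => pow_le_one₀ (hA0 θ) (hA1 θ))
  -- X := fun s θ => n⁻¹ * ∑ facts
  have hXm : ∀ s : Fin n → Z, Measurable fun θ => (n:ℝ)⁻¹ * ∑ i, C (s i) θ := fun s =>
    (Finset.measurable_sum Finset.univ fun i _ => hmz (s i)).const_mul _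
  have hX0 : ∀ (s : Fin n → Z) (θ : Θ), 0 ≤ (n:ℝ)⁻¹ * ∑ i, C (s i) θ := fun s θ =>
    mul_nonneg (by positivity) (Finset.sum_nonneg fun i _ => hC0 _ _)
  have hsumle : ∀ (s : Fin n → Z) (θ : Θ), (∑ i, C (s i) θ) ≤ (n:ℝ) := by
    intro s θ
    calc (∑ i : Fin n, C (s i) θ) ≤ ∑ _i : Fin n, (1:ℝ) :=
          Finset.sum_le_sum fun i _ => hC1 _ _
    _ = n := by simp
  have hX1 : ∀ (s : Fin n → Z) (θ : Θ), (n:ℝ)⁻¹ * ∑ i, C (s i) θ ≤ 1 := by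
    intro s θ
    calc (n:ℝ)⁻¹ * ∑ i, C (s i) θ ≤ (n:ℝ)⁻¹ * n :=
          mul_le_mul_of_nonneg_left (hsumle s θ) (by positivity)
    _ = 1 := inv_mul_cancel₀ hn0
  have hF0m : Measurable fun q : (Fin n → Z) × Θ => (n:ℝ)⁻¹ * ∑ i, C (q.1 i) q.2 :=
    (Finset.measurable_sum Finset.univ fun i _ =>
      hmeas.comp (((measurable_pi_apply i).comp measurable_fst).prodMk measurable_snd)).const_mul _
  have hF1m : Measurable fun q : (Fin n → Z) × Θ => ((n:ℝ)⁻¹ * ∑ i, C (q.1 i) q.2) ^ 2 :=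
    hF0m.pow_const 2
  have hintX : ∀ s : Fin n → Z, Integrable (fun θ => (n:ℝ)⁻¹ * ∑ i, C (s i) θ) μ := fun s =>
    aux_integrable (hXm s).aestronglyMeasurable 1 (hX0 s) (hX1 s)
  have hintX2 : ∀ s : Fin n → Z, Integrable (fun θ => ((n:ℝ)⁻¹ * ∑ i, C (s i) θ) ^ 2) μ := fun s =>
    aux_integrable ((hXm s).pow_const 2).aestronglyMeasurable 1 (fun θ => sq_nonneg _)
      (fun θ => pow_le_one₀ (hX0 s θ) (hX1 s θ))
  -- integrability of the three pieces over the product measure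
  have hint1 : Integrable (fun s => ∫ θ, ((n:ℝ)⁻¹ * ∑ i, C (s i) θ) ^ 2 ∂μ)
      (Measure.pi fun _ : Fin n => ν) :=
    aux_integrable hF1m.stronglyMeasurable.integral_prod_right'.measurable.aestronglyMeasurable 1
      (fun s => integral_nonneg fun θ => sq_nonneg _)
      (fun s => aux_int_le_one (hintX2 s) fun θ => pow_le_one₀ (hX0 s θ) (hX1 s θ))
  have hgm : Measurable fun s : Fin n → Z => ∫ θ, (n:ℝ)⁻¹ * ∑ i, C (s i) θ ∂μ :=
    hF0m.stronglyMeasurable.integral_prod_right'.measurable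
  have hg0 : ∀ s : Fin n → Z, 0 ≤ ∫ θ, (n:ℝ)⁻¹ * ∑ i, C (s i) θ ∂μ := fun s =>
    integral_nonneg (hX0 s)
  have hg1 : ∀ s : Fin n → Z, (∫ θ, (n:ℝ)⁻¹ * ∑ i, C (s i) θ ∂μ) ≤ 1 := fun s =>
    aux_int_le_one (hintX s) (hX1 s)
  have hint2 : Integrable (fun s => (∫ θ, (n:ℝ)⁻¹ * ∑ i, C (s i) θ ∂μ) ^ 2)
      (Measure.pi fun _ : Fin n => ν) :=
    aux_integrable (hgm.pow_const 2).aestronglyMeasurable 1 (fun s => sq_nonneg _)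
      (fun s => pow_le_one₀ (hg0 s) (hg1 s))
  have hq0 : ∀ z, 0 ≤ (∫ θ, C z θ ∂μ) * (1 - ∫ θ, C z θ ∂μ) := fun z =>
    mul_nonneg (hp0 z) (by linarith [hp1 z])
  have hq1 : ∀ z, (∫ θ, C z θ ∂μ) * (1 - ∫ θ, C z θ ∂μ) ≤ 1 := fun z => by
    nlinarith [hp0 z, hp1 z]
  have hint3 : Integrable (fun s : Fin n → Z =>
      ((n:ℝ) ^ 2)⁻¹ * ∑ i, (∫ θ, C (s i) θ ∂μ) * (1 - ∫ θ, C (s i) θ ∂μ))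
      (Measure.pi fun _ : Fin n => ν) := by
    refine aux_integrable ?_ (((n:ℝ) ^ 2)⁻¹ * n) ?_ ?_
    · exact ((Finset.measurable_sum Finset.univ fun i _ =>
        (hpm.comp (measurable_pi_apply i)).mul
          (measurable_const.sub (hpm.comp (measurable_pi_apply i)))).const_mul
        _).aestronglyMeasurable
    · exact fun s => mul_nonneg (by positivity) (Finset.sum_nonneg fun i _ => hq0 _)
    · intro s
      refine mul_le_mul_of_nonneg_left ?_ (by positivity)
      calc (∑ i : Fin n, (∫ θ, C (s i) θ ∂μ) * (1 - ∫ θ, C (s i) θ ∂μ))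
          ≤ ∑ _i : Fin n, (1:ℝ) := Finset.sum_le_sum fun i _ => hq1 _
      _ = n := by simp
  -- Fubini for the mean
  have hswap : ∫ z, (∫ θ, C z θ ∂μ) ∂ν = ∫ θ, (∫ z, C z θ ∂ν) ∂μ := by
    exact integral_integral_swap
      (aux_integrable hmeas.aestronglyMeasurable 1 (fun q => hC0 _ _) (fun q => hC1 _ _))
  -- E1
  have E1 : ∫ s, (∫ θ, ((n:ℝ)⁻¹ * ∑ i, C (s i) θ) ^ 2 ∂μ) ∂(Measure.pi fun _ : Fin n => ν)
      = ((n:ℝ) ^ 2)⁻¹ * ((n:ℝ) * (∫ θ, (∫ z, C z θ ∂ν) ∂μ)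
          + (n:ℝ) * ((n:ℝ) - 1) * ∫ θ, (∫ z, C z θ ∂ν) ^ 2 ∂μ) := by
    have hintF1 : Integrable (Function.uncurry fun (s : Fin n → Z) (θ : Θ) =>
        ((n:ℝ)⁻¹ * ∑ i, C (s i) θ) ^ 2) ((Measure.pi fun _ : Fin n => ν).prod μ) := by
      exact aux_integrable hF1m.aestronglyMeasurable 1
        (fun q => sq_nonneg _) (fun q => pow_le_one₀ (hX0 _ _) (hX1 _ _))
    rw [integral_integral_swap hintF1]
    have hinner : ∀ θ, (∫ s, ((n:ℝ)⁻¹ * ∑ i, C (s i) θ) ^ 2 ∂(Measure.pi fun _ : Fin n => ν))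
        = ((n:ℝ) ^ 2)⁻¹ * ((n:ℝ) * (∫ z, C z θ ∂ν)
            + (n:ℝ) * ((n:ℝ) - 1) * (∫ z, C z θ ∂ν) ^ 2) := by
      intro θ
      have hexp : ∀ s : Fin n → Z, ((n:ℝ)⁻¹ * ∑ i, C (s i) θ) ^ 2
          = ((n:ℝ) ^ 2)⁻¹ * ∑ i, ∑ j, C (s i) θ * C (s j) θ := by
        intro s
        rw [mul_pow, inv_pow, sq (∑ i : Fin n, C (s i) θ), Finset.sum_mul_sum]
      simp_rw [hexp]
      have h0 : (∫ s, (∑ i, ∑ j, C (s i) θ * C (s j) θ) ∂(Measure.pi fun _ : Fin n => ν))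
          = ∑ i : Fin n, ∫ s, (∑ j, C (s i) θ * C (s j) θ)
              ∂(Measure.pi fun _ : Fin n => ν) := by
        refine integral_finset_sum _ (fun i _ => ?_)
        refine aux_integrable ?_ n
          (fun s => Finset.sum_nonneg fun j _ => hCC0 _ _ _) (fun s => ?_)
        · exact (Finset.measurable_sum Finset.univ fun j _ =>
            ((hmθ θ).comp (measurable_pi_apply i)).mul
              ((hmθ θ).comp (measurable_pi_apply j))).aestronglyMeasurable
        · calc (∑ j : Fin n, C (s i) θ * C (s j) θ) ≤ ∑ _j : Fin n, (1:ℝ) :=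
                Finset.sum_le_sum fun j _ => hCC1 _ _ _
          _ = n := by simp
      rw [integral_const_mul, h0]
      have h1 : ∀ i : Fin n,
          (∫ s, (∑ j, C (s i) θ * C (s j) θ) ∂(Measure.pi fun _ : Fin n => ν))
            = ∑ j, ∫ s, C (s i) θ * C (s j) θ ∂(Measure.pi fun _ : Fin n => ν) := by
        intro i
        refine integral_finset_sum _ (fun j _ => ?_)
        exact aux_integrable (((hmθ θ).comp (measurable_pi_apply i)).mul
            ((hmθ θ).comp (measurable_pi_apply j))).aestronglyMeasurable 1
            (fun s => hCC0 _ _ _) (fun s => hCC1 _ _ _)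
      rw [Finset.sum_congr rfl fun i _ => h1 i]
      have h2 : ∀ i j : Fin n,
          (∫ s, C (s i) θ * C (s j) θ ∂(Measure.pi fun _ : Fin n => ν))
            = if i = j then (∫ z, C z θ ∂ν) else (∫ z, C z θ ∂ν) * (∫ z, C z θ ∂ν) := by
        intro i j
        rcases eq_or_ne i j with rfl | hij
        · rw [if_pos rfl]
          simp_rw [hCsq]
          exact aux_int_eval ν n (fun z => C z θ) (hmθ θ) i
        · rw [if_neg hij]
          exact aux_int_pair ν n _ _ (hmθ θ) (hmθ θ) i j hij
      rw [Finset.sum_congr rfl fun i _ => Finset.sum_congr rfl fun j _ => h2 i j, aux_sum_ite]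
      ring
    simp_rw [hinner]
    rw [integral_const_mul, integral_add (hintA.const_mul _) (hintA2.const_mul _),
      integral_const_mul, integral_const_mul]
  -- E2
  have hin2 : ∀ s : Fin n → Z, (∫ θ, (n:ℝ)⁻¹ * ∑ i, C (s i) θ ∂μ)
      = (n:ℝ)⁻¹ * ∑ i, ∫ θ, C (s i) θ ∂μ := by
    intro s
    rw [integral_const_mul, integral_finset_sum _ fun i _ => hintCz (s i)]
  have E2 : ∫ s, (∫ θ, (n:ℝ)⁻¹ * ∑ i, C (s i) θ ∂μ) ^ 2 ∂(Measure.pi fun _ : Fin n => ν)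
      = ((n:ℝ) ^ 2)⁻¹ * ((n:ℝ) * (∫ z, (∫ θ, C z θ ∂μ) ^ 2 ∂ν)
          + (n:ℝ) * ((n:ℝ) - 1) * (∫ z, (∫ θ, C z θ ∂μ) ∂ν) ^ 2) := by
    simp_rw [hin2]
    have hexp : ∀ s : Fin n → Z, ((n:ℝ)⁻¹ * ∑ i, ∫ θ, C (s i) θ ∂μ) ^ 2
        = ((n:ℝ) ^ 2)⁻¹ * ∑ i, ∑ j, (∫ θ, C (s i) θ ∂μ) * (∫ θ, C (s j) θ ∂μ) := by
      intro s
      rw [mul_pow, inv_pow, sq (∑ i : Fin n, ∫ θ, C (s i) θ ∂μ), Finset.sum_mul_sum]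
    simp_rw [hexp]
    have h0 : (∫ s, (∑ i, ∑ j, (∫ θ, C (s i) θ ∂μ) * ∫ θ, C (s j) θ ∂μ)
          ∂(Measure.pi fun _ : Fin n => ν))
        = ∑ i : Fin n, ∫ s, (∑ j, (∫ θ, C (s i) θ ∂μ) * ∫ θ, C (s j) θ ∂μ)
            ∂(Measure.pi fun _ : Fin n => ν) := by
      refine integral_finset_sum _ (fun i _ => ?_)
      refine aux_integrable ?_ n
        (fun s => Finset.sum_nonneg fun j _ => mul_nonneg (hp0 _) (hp0 _)) (fun s => ?_)
      · exact (Finset.measurable_sum Finset.univ fun j _ =>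
          (hpm.comp (measurable_pi_apply i)).mul
            (hpm.comp (measurable_pi_apply j))).aestronglyMeasurable
      · calc (∑ j : Fin n, (∫ θ, C (s i) θ ∂μ) * ∫ θ, C (s j) θ ∂μ)
            ≤ ∑ _j : Fin n, (1:ℝ) := Finset.sum_le_sum fun j _ => by
              nlinarith [hp0 (s i), hp1 (s i), hp0 (s j), hp1 (s j)]
        _ = n := by simp
    rw [integral_const_mul, h0]
    have h1 : ∀ i : Fin n,
        (∫ s, (∑ j, (∫ θ, C (s i) θ ∂μ) * ∫ θ, C (s j) θ ∂μ) ∂(Measure.pi fun _ : Fin n => ν))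
          = ∑ j, ∫ s, (∫ θ, C (s i) θ ∂μ) * ∫ θ, C (s j) θ ∂μ
              ∂(Measure.pi fun _ : Fin n => ν) := by
      intro i
      refine integral_finset_sum _ (fun j _ => ?_)
      exact aux_integrable ((hpm.comp (measurable_pi_apply i)).mul
          (hpm.comp (measurable_pi_apply j))).aestronglyMeasurable 1
          (fun s => mul_nonneg (hp0 _) (hp0 _))
          (fun s => by nlinarith [hp0 (s i), hp1 (s i), hp0 (s j), hp1 (s j)])
    rw [Finset.sum_congr rfl fun i _ => h1 i]
    have h2 : ∀ i j : Fin n,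
        (∫ s, (∫ θ, C (s i) θ ∂μ) * ∫ θ, C (s j) θ ∂μ ∂(Measure.pi fun _ : Fin n => ν))
          = if i = j then (∫ z, (∫ θ, C z θ ∂μ) ^ 2 ∂ν)
            else (∫ z, (∫ θ, C z θ ∂μ) ∂ν) * ∫ z, (∫ θ, C z θ ∂μ) ∂ν := by
      intro i j
      rcases eq_or_ne i j with rfl | hij
      · rw [if_pos rfl]
        have h3 := aux_int_eval ν n (fun z => (∫ θ, C z θ ∂μ) * ∫ θ, C z θ ∂μ)
          (hpm.mul hpm) i
        simp_rw [← sq] at h3 ⊢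
        exact h3
      · rw [if_neg hij]
        exact aux_int_pair ν n _ _ hpm hpm i j hij
    rw [Finset.sum_congr rfl fun i _ => Finset.sum_congr rfl fun j _ => h2 i j, aux_sum_ite]
    ring
  -- E3
  have E3 : ∫ s, (((n:ℝ) ^ 2)⁻¹ * ∑ i, (∫ θ, C (s i) θ ∂μ) * (1 - ∫ θ, C (s i) θ ∂μ))
        ∂(Measure.pi fun _ : Fin n => ν)
      = ((n:ℝ) ^ 2)⁻¹ * (n:ℝ) * ((∫ z, (∫ θ, C z θ ∂μ) ∂ν)
          - ∫ z, (∫ θ, C z θ ∂μ) ^ 2 ∂ν) := by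
    have h0 : (∫ s, (∑ i, (∫ θ, C (s i) θ ∂μ) * (1 - ∫ θ, C (s i) θ ∂μ))
          ∂(Measure.pi fun _ : Fin n => ν))
        = ∑ i : Fin n, ∫ s, (∫ θ, C (s i) θ ∂μ) * (1 - ∫ θ, C (s i) θ ∂μ)
            ∂(Measure.pi fun _ : Fin n => ν) := by
      refine integral_finset_sum _ (fun i _ => ?_)
      exact aux_integrable ((hpm.comp (measurable_pi_apply i)).mul
        (measurable_const.sub (hpm.comp (measurable_pi_apply i)))).aestronglyMeasurable 1
        (fun s => hq0 _) (fun s => hq1 _)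
    rw [integral_const_mul, h0]
    have h1 : ∀ i : Fin n,
        (∫ s, (∫ θ, C (s i) θ ∂μ) * (1 - ∫ θ, C (s i) θ ∂μ) ∂(Measure.pi fun _ : Fin n => ν))
          = (∫ z, (∫ θ, C z θ ∂μ) ∂ν) - ∫ z, (∫ θ, C z θ ∂μ) ^ 2 ∂ν := by
      intro i
      rw [aux_int_eval ν n (fun z => (∫ θ, C z θ ∂μ) * (1 - ∫ θ, C z θ ∂μ))
        (hpm.mul (measurable_const.sub hpm)) i]
      have h4 : (fun z => (∫ θ, C z θ ∂μ) * (1 - ∫ θ, C z θ ∂μ))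
          = fun z => (∫ θ, C z θ ∂μ) - (∫ θ, C z θ ∂μ) ^ 2 := funext fun z => by ring
      rw [h4, integral_sub hintp hintp2]
    rw [Finset.sum_congr rfl fun i _ => h1 i, Finset.sum_const, Finset.card_univ,
      Fintype.card_fin, nsmul_eq_mul]
    ring
  have hint12 : Integrable (fun s : Fin n → Z =>
      (∫ θ, ((n:ℝ)⁻¹ * ∑ i, C (s i) θ) ^ 2 ∂μ)
        - (∫ θ, (n:ℝ)⁻¹ * ∑ i, C (s i) θ ∂μ) ^ 2) (Measure.pi fun _ : Fin n => ν) :=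
    hint1.sub hint2
  rw [integral_sub hint12 hint3, integral_sub hint1 hint2, E1, E2, E3, hswap]
  field_simp
  ring
end

section
/- Binary classification setting: let μ be a probability measure on [0,1] (the distribution of ensemble prediction probabilities p_x), and y : [0,1] → [0,1] a measurable function (conditional label means y_p). Define err = ∫ (p(1 − y_p) + (1 − p)y_p) dμ(p), ECE = ∫ |p − y_p| dμ(p), and V = ∫ p(1 − p) dμ(p). Then |V − err/2| ≤ ECE/2. -/
open MeasureTheory

/-- Lemma 3: for binary classification, |E[p(1−p)] − err/2| ≤ ECE/2, where μ is
the distribution of ensemble probabilities p and y p the conditional label mean. -/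
theorem examplewise_variance_ece_bound
    (μ : Measure ℝ) [IsProbabilityMeasure μ]
    (hsupp : ∀ᵐ p ∂μ, p ∈ Set.Icc (0 : ℝ) 1)
    (y : ℝ → ℝ) (hy : Measurable y) (hy01 : ∀ p, y p ∈ Set.Icc (0 : ℝ) 1) :
    |(∫ p, p * (1 - p) ∂μ)
        - (∫ p, p * (1 - y p) + (1 - p) * y p ∂μ) / 2|
      ≤ (∫ p, |p - y p| ∂μ) / 2 := by
  have hm1 : Measurable fun p : ℝ => p * (1 - p) :=
    measurable_id.mul (measurable_const.sub measurable_id)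
  have hm2 : Measurable fun p : ℝ => p * (1 - y p) + (1 - p) * y p :=
    (measurable_id.mul (measurable_const.sub hy)).add
      ((measurable_const.sub measurable_id).mul hy)
  have hm3 : Measurable fun p : ℝ => |p - y p| := (measurable_id.sub hy).abs
  have hi1 : Integrable (fun p : ℝ => p * (1 - p)) μ := by
    refine (integrable_const (1 : ℝ)).mono' hm1.aestronglyMeasurable ?_
    filter_upwards [hsupp] with p hp
    have h0 := hp.1; have h1 := hp.2
    rw [Real.norm_eq_abs, abs_le]
    constructor <;> nlinarith
  have hi2 : Integrable (fun p : ℝ => p * (1 - y p) + (1 - p) * y p) μ := by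
    refine (integrable_const (2 : ℝ)).mono' hm2.aestronglyMeasurable ?_
    filter_upwards [hsupp] with p hp
    have h0 := hp.1; have h1 := hp.2
    have hy0 := (hy01 p).1; have hy1 := (hy01 p).2
    rw [Real.norm_eq_abs, abs_le]
    constructor <;> nlinarith
  have hi3 : Integrable (fun p : ℝ => |p - y p|) μ := by
    refine (integrable_const (1 : ℝ)).mono' hm3.aestronglyMeasurable ?_
    filter_upwards [hsupp] with p hp
    have hy0 := (hy01 p).1; have hy1 := (hy01 p).2
    rw [Real.norm_eq_abs, abs_abs, abs_le]
    constructor <;> [nlinarith [hp.1, hp.2]; nlinarith [hp.1, hp.2]]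
  have key : (∫ p, p * (1 - p) ∂μ) - (∫ p, p * (1 - y p) + (1 - p) * y p ∂μ) / 2
      = ∫ p, p * (1 - p) - (p * (1 - y p) + (1 - p) * y p) / 2 ∂μ := by
    rw [integral_sub hi1 (hi2.div_const 2), integral_div]
  rw [key]
  calc |∫ p, p * (1 - p) - (p * (1 - y p) + (1 - p) * y p) / 2 ∂μ|
      ≤ ∫ p, |p * (1 - p) - (p * (1 - y p) + (1 - p) * y p) / 2| ∂μ :=
        by simpa [Real.norm_eq_abs] using
          norm_integral_le_integral_norm (μ := μ)
            (fun p => p * (1 - p) - (p * (1 - y p) + (1 - p) * y p) / 2)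
    _ ≤ ∫ p, |p - y p| / 2 ∂μ := by
        apply integral_mono_ae ((hi1.sub (hi2.div_const 2)).abs) (hi3.div_const 2)
        filter_upwards [hsupp] with p hp
        have heq : p * (1 - p) - (p * (1 - y p) + (1 - p) * y p) / 2
            = (1 - 2 * p) * (p - y p) / 2 := by ring
        simp only [Pi.sub_apply]
        rw [heq, abs_div, abs_mul]
        have h2 : |(2:ℝ)| = 2 := by norm_num
        rw [h2]
        have h1 : |1 - 2 * p| ≤ 1 := by
          rw [abs_le]; constructor <;> [linarith [hp.2]; linarith [hp.1]]
        have hnn : (0:ℝ) ≤ |p - y p| := abs_nonneg _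
        have := mul_le_mul_of_nonneg_right h1 hnn
        linarith
    _ = (∫ p, |p - y p| ∂μ) / 2 := by rw [← integral_div]
end

section
/- Let μ be a probability measure on the k-simplex Δ_k = {p ∈ [0,1]^k : Σ p_j = 1}. Define err = ∫ Σ_j p_j(1 − p_j) dμ(p) and W = ∫ Σ_j p_j²(1 − p_j) dμ(p). Then W ≥ err/k². -/
open MeasureTheory Finset

lemma simplex_pointwise (k : ℕ) (hk : 0 < k) (p : Fin k → ℝ)
    (h : (∀ j, 0 ≤ p j ∧ p j ≤ 1) ∧ ∑ j, p j = 1) :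
    (∑ j, p j * (1 - p j)) / (k : ℝ) ^ 2 ≤ ∑ j, p j ^ 2 * (1 - p j) := by
  obtain ⟨hbd, hsum⟩ := h
  haveI : Nonempty (Fin k) := ⟨⟨0, hk⟩⟩
  obtain ⟨m, -, hm⟩ := Finset.exists_max_image Finset.univ p ⟨Classical.arbitrary (Fin k), Finset.mem_univ _⟩
  have hm' : ∀ j, p j ≤ p m := fun j => hm j (Finset.mem_univ j)
  have hkpos : (0:ℝ) < (k:ℝ) := by exact_mod_cast hk
  -- p m ≥ 1/k
  have h1 : (1:ℝ) ≤ k * p m := by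
    calc (1:ℝ) = ∑ j, p j := hsum.symm
    _ ≤ ∑ _j : Fin k, p m := Finset.sum_le_sum (fun j _ => hm' j)
    _ = k * p m := by simp [Finset.sum_const, mul_comm]
  -- each term bounded
  have h2 : ∑ j, p j * (1 - p j) ≤ k * (p m * (1 - p m)) := by
    have : ∀ j ∈ Finset.univ, p j * (1 - p j) ≤ p m * (1 - p m) := by
      intro j _
      by_cases hj : j = m
      · subst hj
        exact le_refl _
      · have hab : p j + p m ≤ 1 := by
          have : p j + p m = ∑ i ∈ ({j, m} : Finset (Fin k)), p i := by
            rw [Finset.sum_pair hj]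
          have hsub : ∑ i ∈ ({j, m} : Finset (Fin k)), p i ≤ ∑ i, p i :=
            Finset.sum_le_sum_of_subset_of_nonneg (Finset.subset_univ _)
              (fun i _ _ => (hbd i).1)
          linarith [hsum ▸ hsub, this]
        nlinarith [(hbd j).1, hm' j]
    calc ∑ j, p j * (1 - p j) ≤ ∑ _j : Fin k, p m * (1 - p m) :=
          Finset.sum_le_sum this
      _ = k * (p m * (1 - p m)) := by simp [Finset.sum_const, mul_comm]
  -- single term lower bound
  have h3 : p m ^ 2 * (1 - p m) ≤ ∑ j, p j ^ 2 * (1 - p j) :=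
    Finset.single_le_sum (f := fun j => p j ^ 2 * (1 - p j)) (fun j _ => mul_nonneg (sq_nonneg _) (by linarith [(hbd j).2])) (Finset.mem_univ m)
  have hpm1 : p m ≤ 1 := (hbd m).2
  rw [div_le_iff₀ (by positivity)]
  have hx : (0:ℝ) ≤ (1 - p m) * ((k * p m) * (k * p m - 1)) :=
    mul_nonneg (by linarith) (mul_nonneg (by linarith) (by linarith))
  have hy := mul_le_mul_of_nonneg_right h3 (sq_nonneg (k:ℝ))
  nlinarith [hx, hy, h2]

/-- For a probability measure μ on the k-simplex, with
err = ∫ Σ pⱼ(1−pⱼ) dμ and W = ∫ Σ pⱼ²(1−pⱼ) dμ, we have W ≥ err/k². -/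
theorem simplex_integral_sq_var_ge_err_div_k_sq
    (k : ℕ) (hk : 0 < k)
    (μ : Measure (Fin k → ℝ)) [IsProbabilityMeasure μ]
    (hsimplex : ∀ᵐ p ∂μ, (∀ j, 0 ≤ p j ∧ p j ≤ 1) ∧ ∑ j, p j = 1) :
    (∫ p, ∑ j, p j * (1 - p j) ∂μ) / (k : ℝ) ^ 2
      ≤ ∫ p, ∑ j, p j ^ 2 * (1 - p j) ∂μ := by
  have hcont1 : Continuous fun p : Fin k → ℝ => ∑ j, p j * (1 - p j) := by
    continuity
  have hcont2 : Continuous fun p : Fin k → ℝ => ∑ j, p j ^ 2 * (1 - p j) := by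
    continuity
  have hbound : ∀ᵐ p ∂μ, ‖∑ j, p j * (1 - p j)‖ ≤ k := by
    filter_upwards [hsimplex] with p ⟨hbd, _⟩
    rw [Real.norm_eq_abs, abs_le]
    constructor
    · have : (0:ℝ) ≤ ∑ j, p j * (1 - p j) :=
        Finset.sum_nonneg fun j _ => mul_nonneg (hbd j).1 (by linarith [(hbd j).2])
      linarith [this, Nat.cast_nonneg (α := ℝ) k]
    · calc ∑ j, p j * (1 - p j) ≤ ∑ _j : Fin k, (1:ℝ) :=
            Finset.sum_le_sum fun j _ => by nlinarith [(hbd j).1, (hbd j).2]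
        _ = k := by simp
  have hbound2 : ∀ᵐ p ∂μ, ‖∑ j, p j ^ 2 * (1 - p j)‖ ≤ k := by
    filter_upwards [hsimplex] with p ⟨hbd, _⟩
    rw [Real.norm_eq_abs, abs_le]
    constructor
    · have : (0:ℝ) ≤ ∑ j, p j ^ 2 * (1 - p j) :=
        Finset.sum_nonneg fun j _ => mul_nonneg (by positivity) (by linarith [(hbd j).2])
      linarith [this, Nat.cast_nonneg (α := ℝ) k]
    · calc ∑ j, p j ^ 2 * (1 - p j) ≤ ∑ _j : Fin k, (1:ℝ) :=
            Finset.sum_le_sum fun j _ => by nlinarith [(hbd j).1, (hbd j).2]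
        _ = k := by simp
  have hint1 : Integrable (fun p : Fin k → ℝ => ∑ j, p j * (1 - p j)) μ :=
    Integrable.mono' (integrable_const (k:ℝ)) hcont1.aestronglyMeasurable hbound
  have hint2 : Integrable (fun p : Fin k → ℝ => ∑ j, p j ^ 2 * (1 - p j)) μ :=
    Integrable.mono' (integrable_const (k:ℝ)) hcont2.aestronglyMeasurable hbound2
  rw [div_eq_mul_inv, ← integral_mul_const]
  apply integral_mono_ae (hint1.mul_const _) hint2
  filter_upwards [hsimplex] with p hp
  have := simplex_pointwise k hk p hp
  rw [div_eq_mul_inv] at this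
  exact this
end
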